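/- Let 1 ≤ p_A, p_B, p_H ≤ ∞, let a, b ∈ ℝ^d satisfy αᵀa < β and αᵀb > β, and let ω_a, ω_b, ω_H > 0. If the pair (x*, y*) ∈ 𝓗 × 𝓗 minimizes the function (x, y) ↦ ω_a‖x − a‖_{p_A} + ω_H‖x − y‖_{p_H} + ω_b‖y − b‖_{p_B} over 𝓗 × 𝓗, then there exist λ_a, λ_b ∈ ℝ such that λ_a α ∈ ω_a ∂(‖· − a‖_{p_A})(x*) + ω_H ∂(‖· − y*‖_{p_H})(x*) and λ_b α ∈ ω_b ∂(‖· − b‖_{p_B})(y*) + ω_H ∂(‖x* − ·‖_{p_H})(y*), where the sums are Minkowski sums of subdifferential sets. -/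

import Mathlib

open scoped ENNReal BigOperators Pointwise

/-- The `ℓ_p` norm on `ℝ^d` for `p : ℝ≥0∞` (intended for `1 ≤ p ≤ ∞`). -/
noncomputable def lpNorm {d : ℕ} (p : ℝ≥0∞) (x : Fin d → ℝ) : ℝ :=
  if p = ∞ then ⨆ k, |x k| else (∑ k, |x k| ^ p.toReal) ^ (1 / p.toReal)

/-- The (convex-analysis) subdifferential of `f : ℝ^d → ℝ` at `x`. -/
def subdiff {d : ℕ} (f : (Fin d → ℝ) → ℝ) (x : Fin d → ℝ) : Set (Fin d → ℝ) :=
  {u | ∀ y, f x + ∑ i, u i * (y i - x i) ≤ f y}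

/-!
Fixing `y*`, the gate `x*` minimizes the convex function `ωa‖· - a‖ + ωH‖· - y*‖` over `𝓗`
(and symmetrically for `y*`), so the claim is the optimality condition for a sum of two finite
convex functions on a hyperplane. Both of its ingredients come from one separation argument:
in `ℝ^d × ℝ`, the open strict epigraph of a continuous convex `φ` is disjoint from the hypograph
of `φ x + ψ x - ψ` whenever `x` minimizes `φ + ψ`. With `ψ = 0` on `𝓗` this gives a subgradient
of the sum vanishing on the tangent space of `𝓗`, hence of the form `μ α`; with `ψ` the second
summand minus `μ α` on the whole space, it splits `μ α` into subgradients of the two summands.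
-/

open Set

section Separation

variable {E : Type*} [AddCommGroup E] [Module ℝ E] [TopologicalSpace E] [IsTopologicalAddGroup E]
  [ContinuousSMul ℝ E]

theorem exists_dual_le_sub_of_isMinOn_add {φ ψ : E → ℝ} {C : Set E} {x : E}
    (hφ : ConvexOn ℝ univ φ) (hφc : Continuous φ) (hψ : ConvexOn ℝ C ψ) (hx : x ∈ C)
    (hmin : IsMinOn (φ + ψ) C x) :
    ∃ ℓ : StrongDual ℝ E, (∀ y, ℓ (y - x) ≤ φ y - φ x) ∧ ∀ y ∈ C, -ℓ (y - x) ≤ ψ y - ψ x := by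
  have hA : IsOpen {p : E × ℝ | p.1 ∈ univ ∧ φ p.1 < p.2} := by
    simpa using isOpen_lt (hφc.comp continuous_fst) continuous_snd
  have hB : Convex ℝ {p : E × ℝ | p.1 ∈ C ∧ p.2 ≤ φ x + ψ x - ψ p.1} :=
    ((concaveOn_const (φ x + ψ x) hψ.1).sub hψ).convex_hypograph
  have hAB : Disjoint {p : E × ℝ | p.1 ∈ univ ∧ φ p.1 < p.2}
      {p : E × ℝ | p.1 ∈ C ∧ p.2 ≤ φ x + ψ x - ψ p.1} := by
    refine Set.disjoint_left.2 fun ⟨y, s⟩ ⟨_, hys⟩ ⟨hy, hsy⟩ => ?_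
    have : φ x + ψ x ≤ φ y + ψ y := hmin hy
    dsimp only at hys hsy
    linarith
  obtain ⟨f, u, hfA, hfB⟩ := geometric_hahn_banach_open hφ.convex_strict_epigraph hA hB hAB
  -- `f (y, s) = ℓ y + s κ` with `κ < 0`, so `(-κ)⁻¹ • ℓ` is the required functional.
  set κ := f (0, 1)
  set ℓ := f.comp (ContinuousLinearMap.inl ℝ E ℝ)
  have hf : ∀ y s, f (y, s) = ℓ y + s * κ := fun y s => by
    have : ((y, s) : E × ℝ) = (y, 0) + s • ((0 : E), (1 : ℝ)) := by simp
    rw [this, map_add, map_smul, smul_eq_mul]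
    rfl
  have hκ : κ < 0 := by
    have h₁ := hfA (x, φ x + 1) ⟨trivial, by simp⟩
    have h₂ := hfB (x, φ x) ⟨hx, by simp⟩
    rw [hf] at h₁ h₂
    linarith
  have hφu : ∀ y, ℓ y + φ y * κ ≤ u := fun y => by
    refine le_of_forall_pos_lt_add fun ε hε => ?_
    have hε' : 0 < ε / -κ := div_pos hε (neg_pos.2 hκ)
    have h := hfA (y, φ y + ε / -κ) ⟨trivial, by simpa using hε'⟩
    rw [hf, add_mul, div_mul_eq_mul_div, div_neg, mul_div_cancel_right₀ _ hκ.ne] at h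
    linarith
  have hψu : ∀ y ∈ C, u ≤ ℓ y + (φ x + ψ x - ψ y) * κ := fun y hy => by
    simpa [hf] using hfB (y, _) ⟨hy, le_rfl⟩
  have hu : u = ℓ x + φ x * κ := le_antisymm (by simpa using hψu x hx) (hφu x)
  refine ⟨(-κ)⁻¹ • ℓ, fun y => ?_, fun y hy => ?_⟩
  · change (-κ)⁻¹ * ℓ (y - x) ≤ _
    rw [inv_mul_le_iff₀ (neg_pos.2 hκ), map_sub]
    linarith [hφu y]
  · change -((-κ)⁻¹ * ℓ (y - x)) ≤ _
    rw [← mul_neg, inv_mul_le_iff₀ (neg_pos.2 hκ), map_sub]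
    linarith [hψu y hy]

theorem exists_mul_le_sub_of_isMinOn_hyperplane {φ : E → ℝ} {x : E} (hφ : ConvexOn ℝ univ φ)
    (hφc : Continuous φ) (f : E →ₗ[ℝ] ℝ) (hmin : IsMinOn φ {y | f y = f x} x) :
    ∃ μ : ℝ, ∀ y, μ * f (y - x) ≤ φ y - φ x := by
  obtain ⟨ℓ, hℓφ, hℓC⟩ := exists_dual_le_sub_of_isMinOn_add (ψ := 0) hφ hφc
    (convexOn_const 0 (convex_hyperplane f.isLinear _)) rfl (by simpa using hmin)
  have hker : LinearMap.ker f ≤ LinearMap.ker (ℓ : E →ₗ[ℝ] ℝ) := fun v hv => by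
    have h₁ := hℓC (x + v) (by simp_all)
    have h₂ := hℓC (x - v) (by simp_all)
    simp only [add_sub_cancel_left, sub_sub_cancel_left, map_neg, Pi.zero_apply, sub_zero] at h₁ h₂
    simp only [LinearMap.mem_ker, ContinuousLinearMap.coe_coe]
    linarith
  obtain ⟨μ, hμ⟩ := Submodule.mem_span_singleton.1 <| by
    simpa using mem_span_of_iInf_ker_le_ker (L := fun _ : Unit => f) (by simpa using hker)
  exact ⟨μ, fun y => (LinearMap.congr_fun hμ (y - x)).trans_le (hℓφ y)⟩

end Separation

section Subdifferential

variable {d : ℕ}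

theorem mem_smul_subdiff_of_dotProduct_le {g : (Fin d → ℝ) → ℝ} {x w : Fin d → ℝ} {c : ℝ}
    (hc : 0 < c) (h : ∀ y, w ⬝ᵥ (y - x) ≤ c * (g y - g x)) : w ∈ c • subdiff g x := by
  refine ⟨c⁻¹ • w, fun y => ?_, smul_inv_smul₀ hc.ne' w⟩
  change g x + (c⁻¹ • w) ⬝ᵥ (y - x) ≤ g y
  rw [smul_dotProduct, smul_eq_mul, ← le_sub_iff_add_le', inv_mul_le_iff₀ hc]
  exact h y

theorem exists_smul_mem_add_smul_subdiff_of_isMinOn {g₁ g₂ : (Fin d → ℝ) → ℝ}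
    (hg₁ : ConvexOn ℝ univ g₁) (hg₂ : ConvexOn ℝ univ g₂) {ω₁ ω₂ : ℝ} (hω₁ : 0 < ω₁)
    (hω₂ : 0 < ω₂) {α x : Fin d → ℝ}
    (hmin : IsMinOn (fun y => ω₁ * g₁ y + ω₂ * g₂ y) {y | α ⬝ᵥ y = α ⬝ᵥ x} x) :
    ∃ μ : ℝ, μ • α ∈ ω₁ • subdiff g₁ x + ω₂ • subdiff g₂ x := by
  have hF : ConvexOn ℝ univ fun y => ω₁ * g₁ y + ω₂ * g₂ y :=
    (hg₁.smul hω₁.le).add (hg₂.smul hω₂.le)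
  obtain ⟨μ, hμ⟩ := exists_mul_le_sub_of_isMinOn_hyperplane hF
    (continuousOn_univ.1 (hF.continuousOn isOpen_univ)) (dotProductEquiv ℝ (Fin d) α) hmin
  obtain ⟨ℓ, hℓ₁, hℓ₂⟩ := exists_dual_le_sub_of_isMinOn_add (C := univ) (x := x)
    (φ := fun y => ω₁ * g₁ y) (ψ := fun y => ω₂ * g₂ y - μ * α ⬝ᵥ y) (hg₁.smul hω₁.le)
    (continuousOn_univ.1 ((hg₁.smul hω₁.le).continuousOn isOpen_univ))
    ((hg₂.smul hω₂.le).sub ((μ • dotProductEquiv ℝ (Fin d) α).concaveOn convex_univ)) trivial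
    fun y _ => by
      have := hμ y
      change μ * (α ⬝ᵥ (y - x)) ≤ _ at this
      change ω₁ * g₁ x + (ω₂ * g₂ x - μ * α ⬝ᵥ x) ≤ ω₁ * g₁ y + (ω₂ * g₂ y - μ * α ⬝ᵥ y)
      rw [dotProduct_sub, mul_sub] at this
      linarith
  set w := (dotProductEquiv ℝ (Fin d)).symm ℓ
  have hw : ∀ v, ℓ v = w ⬝ᵥ v := fun v =>
    (LinearMap.congr_fun ((dotProductEquiv ℝ (Fin d)).apply_symm_apply ℓ) v).symm
  refine ⟨μ, ?_⟩
  rw [← add_sub_cancel w (μ • α)]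
  refine Set.add_mem_add (mem_smul_subdiff_of_dotProduct_le hω₁ fun y => ?_)
    (mem_smul_subdiff_of_dotProduct_le hω₂ fun y => ?_)
  · rw [← hw, mul_sub]
    exact hℓ₁ y
  · have := hℓ₂ y trivial
    rw [hw] at this
    rw [sub_dotProduct, smul_dotProduct, smul_eq_mul, dotProduct_sub]
    linarith

end Subdifferential

section LpNorm

variable {d : ℕ} {p : ℝ≥0∞} [Fact (1 ≤ p)]

theorem lpNorm_eq_norm_toLp (x : Fin d → ℝ) : lpNorm p x = ‖WithLp.toLp p x‖ := by
  rcases eq_or_ne p ∞ with rfl | hp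
  · simp [lpNorm, PiLp.norm_eq_ciSup]
  · have hp₀ : 0 < p.toReal := ENNReal.toReal_pos (zero_lt_one.trans_le Fact.out).ne' hp
    rw [lpNorm, if_neg hp, PiLp.norm_eq_sum hp₀]
    simp

theorem lpNorm_sub_comm (x y : Fin d → ℝ) : lpNorm p (x - y) = lpNorm p (y - x) := by
  simp only [lpNorm_eq_norm_toLp, WithLp.toLp_sub, norm_sub_rev]

theorem convexOn_lpNorm_sub (c : Fin d → ℝ) : ConvexOn ℝ univ fun z => lpNorm p (z - c) := by
  simp only [lpNorm_eq_norm_toLp, WithLp.toLp_sub, ← dist_eq_norm]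
  exact (convexOn_univ_dist (WithLp.toLp p c)).comp_linearMap
    (WithLp.linearEquiv p ℝ (Fin d → ℝ)).symm.toLinearMap

end LpNorm

theorem stmt_9_general {d : ℕ} (pA pB pH : ℝ≥0∞) (hpA : 1 ≤ pA) (hpB : 1 ≤ pB) (hpH : 1 ≤ pH)
    (α : Fin d → ℝ) (β : ℝ)
    (a b : Fin d → ℝ)
    (ωa ωb ωH : ℝ) (hωa : 0 < ωa) (hωb : 0 < ωb) (hωH : 0 < ωH)
    (xs ys : Fin d → ℝ) (hxs : ∑ i, α i * xs i = β) (hys : ∑ i, α i * ys i = β)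
    (hmin : ∀ x y : Fin d → ℝ, ∑ i, α i * x i = β → ∑ i, α i * y i = β →
        ωa * lpNorm pA (xs - a) + ωH * lpNorm pH (xs - ys) + ωb * lpNorm pB (ys - b) ≤
          ωa * lpNorm pA (x - a) + ωH * lpNorm pH (x - y) + ωb * lpNorm pB (y - b)) :
    (∃ lama : ℝ, lama • α ∈
        ωa • subdiff (fun z => lpNorm pA (z - a)) xs +
          ωH • subdiff (fun z => lpNorm pH (z - ys)) xs) ∧
    (∃ lamb : ℝ, lamb • α ∈
        ωb • subdiff (fun z => lpNorm pB (z - b)) ys +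
          ωH • subdiff (fun z => lpNorm pH (xs - z)) ys) := by
  have := Fact.mk hpA
  have := Fact.mk hpB
  have := Fact.mk hpH
  constructor
  · refine exists_smul_mem_add_smul_subdiff_of_isMinOn (convexOn_lpNorm_sub a)
      (convexOn_lpNorm_sub ys) hωa hωH (isMinOn_iff.2 fun x hx => ?_)
    have := hmin x ys (Eq.trans hx hxs) hys
    linarith
  · rw [show (fun z => lpNorm pH (xs - z)) = fun z => lpNorm pH (z - xs) from
      funext fun z => lpNorm_sub_comm xs z]
    refine exists_smul_mem_add_smul_subdiff_of_isMinOn (convexOn_lpNorm_sub b)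
      (convexOn_lpNorm_sub xs) hωb hωH (isMinOn_iff.2 fun y hy => ?_)
    have := hmin xs y hxs (Eq.trans hy hys)
    rw [lpNorm_sub_comm y xs, lpNorm_sub_comm ys xs]
    linarith

/-- Lemma 9: optimality conditions for the two gate points `x*, y*` of the
shortest weighted path between `a` and `b` when travel along the hyperplane
(with norm `ℓ_{p_H}`) is allowed. -/
theorem stmt_9 {d : ℕ} (pA pB pH : ℝ≥0∞) (hpA : 1 ≤ pA) (hpB : 1 ≤ pB) (hpH : 1 ≤ pH)
    (α : Fin d → ℝ) (hα : α ≠ 0) (β : ℝ)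
    (a b : Fin d → ℝ) (ha : ∑ i, α i * a i < β) (hb : β < ∑ i, α i * b i)
    (ωa ωb ωH : ℝ) (hωa : 0 < ωa) (hωb : 0 < ωb) (hωH : 0 < ωH)
    (xs ys : Fin d → ℝ) (hxs : ∑ i, α i * xs i = β) (hys : ∑ i, α i * ys i = β)
    (hmin : ∀ x y : Fin d → ℝ, ∑ i, α i * x i = β → ∑ i, α i * y i = β →
        ωa * lpNorm pA (xs - a) + ωH * lpNorm pH (xs - ys) + ωb * lpNorm pB (ys - b) ≤
          ωa * lpNorm pA (x - a) + ωH * lpNorm pH (x - y) + ωb * lpNorm pB (y - b)) :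
    (∃ lama : ℝ, lama • α ∈
        ωa • subdiff (fun z => lpNorm pA (z - a)) xs +
          ωH • subdiff (fun z => lpNorm pH (z - ys)) xs) ∧
    (∃ lamb : ℝ, lamb • α ∈
        ωb • subdiff (fun z => lpNorm pB (z - b)) ys +
          ωH • subdiff (fun z => lpNorm pH (xs - z)) ys) :=
  stmt_9_general pA pB pH hpA hpB hpH α β a b ωa ωb ωH hωa hωb hωH xs ys hxs hys hmin
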